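/- arXiv:1706.04649 — 2 statements merged into one kernel-verified Lean document; each statement's English description precedes it below -/
import Mathlib

section
/- The two definitions of gapless R-tuple are equivalent: an R-increasing upper tuple γ has a flag R-critical list (all critical entries weakly increasing in order) if and only if for all h ∈ [r] with γ_{q_h} > γ_{q_h+1}, setting s = γ_{q_h} − γ_{q_h+1} + 1, one has s ≤ p_{h+1} and the first s entries of the (h+1)-st carrel are γ_{q_h}−s+1, ..., γ_{q_h}. -/
def IsUpperTuple (n : ℕ) (ν : Fin n → ℕ) : Prop :=
  ∀ i : Fin n, i.val + 1 ≤ ν i ∧ ν i ≤ n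

def IsRIncr (n : ℕ) (R : Finset ℕ) (ν : Fin n → ℕ) : Prop :=
  ∀ i j : Fin n, j.val = i.val + 1 → (i.val + 1) ∉ R → ν i < ν j

def IsRIncrUpper (n : ℕ) (R : Finset ℕ) (ν : Fin n → ℕ) : Prop :=
  IsUpperTuple n ν ∧ IsRIncr n R ν

def IsRPerm (n : ℕ) (R : Finset ℕ) (π : Equiv.Perm (Fin n)) : Prop :=
  ∀ i j : Fin n, j.val = i.val + 1 → (i.val + 1) ∉ R → π i < π j

def Avoids312 (n : ℕ) (π : Equiv.Perm (Fin n)) : Prop :=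
  ¬ ∃ a b c : Fin n, a < b ∧ b < c ∧ π b < π a ∧ π b < π c ∧ π c < π a

def RAvoids312 (n : ℕ) (R : Finset ℕ) (π : Equiv.Perm (Fin n)) : Prop :=
  ¬ ∃ a b c : Fin n, a < b ∧ b < c ∧
      (∃ q ∈ R, a.val + 1 ≤ q ∧ q ≤ b.val) ∧
      (∃ q ∈ R, b.val + 1 ≤ q ∧ q ≤ c.val) ∧
      π b < π a ∧ π b < π c ∧ π c < π a

def carrelEnd (n : ℕ) (R : Finset ℕ) (i : Fin n) : ℕ :=
  ((insert n R).filter (fun q => i.val + 1 ≤ q)).min'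
    ⟨n, Finset.mem_filter.mpr ⟨Finset.mem_insert_self n R, i.isLt⟩⟩

def SameCarrel {n : ℕ} (R : Finset ℕ) (i j : Fin n) : Prop :=
  ∀ q ∈ R, ¬(i.val + 1 ≤ q ∧ q ≤ j.val)

def IsCritical (n : ℕ) (R : Finset ℕ) (ν : Fin n → ℕ) (i : Fin n) : Prop :=
  ∀ j : Fin n, i < j → SameCarrel R i j → ν i + j.val < ν j + i.val

open Classical in
noncomputable def coreMap (n : ℕ) (R : Finset ℕ) (ν : Fin n → ℕ) (i : Fin n) : ℕ :=
  let s : Finset (Fin n) :=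
    Finset.univ.filter (fun x => i ≤ x ∧ SameCarrel R i x ∧ IsCritical n R ν x)
  if h : s.Nonempty then ν (s.min' h) - ((s.min' h).val - i.val) else 0

def critList (n : ℕ) (R : Finset ℕ) (ν : Fin n → ℕ) : Set (Fin n × ℕ) :=
  {p | IsCritical n R ν p.1 ∧ p.2 = ν p.1}

def rankTuple (n : ℕ) (R : Finset ℕ) (π : Equiv.Perm (Fin n)) (i : Fin n) : ℕ :=
  (((Finset.univ.filter (fun j : Fin n => j.val < carrelEnd n R i)).image
      (fun j => (π j).val + 1)).sort (· ≤ ·)).getD i.val 0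

def GaplessCond (n : ℕ) (R : Finset ℕ) (γ : Fin n → ℕ) : Prop :=
  ∀ q : ℕ, q ∈ R → ∀ (_ : 0 < q) (h2 : q < n),
    γ ⟨q, h2⟩ < γ ⟨q - 1, by omega⟩ →
      (q + (γ ⟨q - 1, by omega⟩ - γ ⟨q, h2⟩ + 1) ≤ carrelEnd n R ⟨q, h2⟩ ∧
        ∀ t : ℕ, t < γ ⟨q - 1, by omega⟩ - γ ⟨q, h2⟩ + 1 → ∀ (ht : q + t < n),
          γ ⟨q + t, ht⟩ =
            γ ⟨q - 1, by omega⟩ - (γ ⟨q - 1, by omega⟩ - γ ⟨q, h2⟩ + 1) + 1 + t)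

def IsRProj (n : ℕ) (R : Finset ℕ) (σ π : Equiv.Perm (Fin n)) : Prop :=
  IsRPerm n R π ∧ ∀ q ∈ R,
    (Finset.univ.filter (fun j : Fin n => j.val < q)).image (fun j => σ j) =
    (Finset.univ.filter (fun j : Fin n => j.val < q)).image (fun j => π j)

section Helpers
variable {n : ℕ} {R : Finset ℕ} {γ : Fin n → ℕ}

lemma sameCarrel_mono {i j i' j' : Fin n} (h : SameCarrel R i j)
    (h1 : i.val ≤ i'.val) (h2 : j'.val ≤ j.val) : SameCarrel R i' j' := by
  intro q hq hc
  exact h q hq ⟨by omega, by omega⟩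

lemma chain_aux (hγ : IsRIncrUpper n R γ) :
    ∀ d : ℕ, ∀ i j : Fin n, j.val = i.val + d → SameCarrel R i j →
      γ i + d ≤ γ j := by
  intro d
  induction d with
  | zero =>
    intro i j h _
    have : i = j := Fin.ext (by omega)
    simp [this]
  | succ d ih =>
    intro i j h hsc
    have hj' : i.val + d < n := by have := j.isLt; omega
    set j' : Fin n := ⟨i.val + d, hj'⟩ with hj'def
    have hv : j'.val = i.val + d := rfl
    have h1 : γ i + d ≤ γ j' := ih i j' rfl (sameCarrel_mono hsc le_rfl (by omega))
    have hstep : γ j' < γ j := by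
      apply hγ.2 j' j (by omega)
      intro hmem
      exact hsc _ hmem ⟨by omega, by omega⟩
    omega

lemma chain (hγ : IsRIncrUpper n R γ) {i j : Fin n} (h : i.val ≤ j.val)
    (hsc : SameCarrel R i j) : γ i + (j.val - i.val) ≤ γ j :=
  chain_aux hγ (j.val - i.val) i j (by omega) hsc

lemma carrelEnd_pos (i : Fin n) : i.val < carrelEnd n R i := by
  have h := Finset.min'_mem ((insert n R).filter (fun q => i.val + 1 ≤ q))
    ⟨n, Finset.mem_filter.mpr ⟨Finset.mem_insert_self n R, i.isLt⟩⟩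
  exact (Finset.mem_filter.mp h).2

lemma carrelEnd_mem (i : Fin n) : carrelEnd n R i ∈ insert n R := by
  have h := Finset.min'_mem ((insert n R).filter (fun q => i.val + 1 ≤ q))
    ⟨n, Finset.mem_filter.mpr ⟨Finset.mem_insert_self n R, i.isLt⟩⟩
  exact (Finset.mem_filter.mp h).1

lemma carrelEnd_le_n (i : Fin n) : carrelEnd n R i ≤ n :=
  Finset.min'_le _ n (Finset.mem_filter.mpr ⟨Finset.mem_insert_self n R, i.isLt⟩)

lemma carrelEnd_le {i : Fin n} {m : ℕ} (hm : m ∈ insert n R) (h : i.val + 1 ≤ m) :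
    carrelEnd n R i ≤ m :=
  Finset.min'_le _ m (Finset.mem_filter.mpr ⟨hm, h⟩)

lemma sameCarrel_of_lt_end (i : Fin n) {k1 k2 : Fin n} (h1 : i.val ≤ k1.val)
    (h2 : k2.val < carrelEnd n R i) : SameCarrel R k1 k2 := by
  intro m hm hc
  have := carrelEnd_le (i := i) (Finset.mem_insert_of_mem hm) (by omega)
  omega

lemma crit_of_succ_mem {i : Fin n} (h : i.val + 1 ∈ insert n R) :
    IsCritical n R γ i := by
  intro j hij hsc
  exfalso
  have hij' : i.val < j.val := hij
  rcases Finset.mem_insert.mp h with h | h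
  · have := j.isLt; omega
  · exact hsc _ h ⟨le_rfl, by omega⟩

lemma not_crit (hγ : IsRIncrUpper n R γ) (i : Fin n) (h : ¬ IsCritical n R γ i) :
    ∃ hlt : i.val + 1 < n, (i.val + 1) ∉ R ∧ γ ⟨i.val + 1, hlt⟩ = γ i + 1 := by
  unfold IsCritical at h
  push_neg at h
  obtain ⟨j, hij, hsc, hle⟩ := h
  have hij' : i.val < j.val := hij
  have hlt : i.val + 1 < n := by have := j.isLt; omega
  have hnR : i.val + 1 ∉ R := fun hm => hsc _ hm ⟨le_rfl, by omega⟩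
  set i1 : Fin n := ⟨i.val + 1, hlt⟩ with hi1
  have hv : i1.val = i.val + 1 := rfl
  have h1 : γ i < γ i1 := hγ.2 i i1 rfl hnR
  have h2 : γ i1 + (j.val - i1.val) ≤ γ j :=
    chain hγ (by omega) (sameCarrel_mono hsc (by omega) le_rfl)
  exact ⟨hlt, hnR, by show γ i1 = γ i + 1; omega⟩

end Helpers

section Main
variable {n : ℕ} {R : Finset ℕ} {γ : Fin n → ℕ}

lemma back_aux (hR : R ⊆ Finset.Ico 1 n) (hγ : IsRIncrUpper n R γ) (hG : GaplessCond n R γ) :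
    ∀ d : ℕ, ∀ i j : Fin n, IsCritical n R γ i → IsCritical n R γ j → i ≤ j →
      j.val - i.val ≤ d → γ i ≤ γ j := by
  intro d
  induction d with
  | zero =>
    intro i j _ _ hle hd
    have hle' : i.val ≤ j.val := Fin.le_def.mp hle
    have : i = j := Fin.ext (by omega)
    exact this ▸ le_rfl
  | succ d ih =>
    intro i j hci hcj hle hd
    have hle' : i.val ≤ j.val := Fin.le_def.mp hle
    by_cases hij : i.val = j.val
    · exact (Fin.ext hij : i = j) ▸ le_rfl
    replace hij : i.val < j.val := by omega
    by_cases hsc : SameCarrel R i j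
    · have := chain hγ (le_of_lt hij) hsc
      omega
    · have hex : ∃ m ∈ R, i.val + 1 ≤ m ∧ m ≤ j.val := by
        unfold SameCarrel at hsc
        push_neg at hsc
        obtain ⟨m, hm, h1, h2⟩ := hsc
        exact ⟨m, hm, h1, h2⟩
      set S := R.filter (fun m => i.val + 1 ≤ m ∧ m ≤ j.val) with hSdef
      have hSne : S.Nonempty := by
        obtain ⟨m, hm, h1, h2⟩ := hex
        exact ⟨m, Finset.mem_filter.mpr ⟨hm, h1, h2⟩⟩
      set q := S.min' hSne with hqdef
      have hqmem : q ∈ R ∧ (i.val + 1 ≤ q ∧ q ≤ j.val) :=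
        Finset.mem_filter.mp (Finset.min'_mem S hSne)
      obtain ⟨hqR, hq1, hq2⟩ := hqmem
      have hqmin : ∀ m ∈ R, i.val + 1 ≤ m → m ≤ j.val → q ≤ m := fun m hm h1 h2 =>
        Finset.min'_le S m (Finset.mem_filter.mpr ⟨hm, h1, h2⟩)
      have hq0 : 0 < q ∧ q < n := by
        have := hR hqR
        rw [Finset.mem_Ico] at this
        omega
      set qf : Fin n := ⟨q, hq0.2⟩ with hqfdef
      have hqfv : qf.val = q := rfl
      set pf : Fin n := ⟨q - 1, by omega⟩ with hpfdef
      have hpfv : pf.val = q - 1 := rfl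
      have hip : γ i ≤ γ pf := by
        have hsc2 : SameCarrel R i pf := by
          intro m hm hmc
          have := hqmin m hm hmc.1 (by omega)
          omega
        have := chain hγ (by omega) hsc2
        omega
      set e := carrelEnd n R qf with hedef
      have heq : q < e := carrelEnd_pos qf
      have hen : e ≤ n := carrelEnd_le_n qf
      have claim : ∀ k : Fin n, IsCritical n R γ k → q ≤ k.val → k.val < e → γ pf ≤ γ k := by
        intro k hck hk1 hk2
        by_cases hdrop : γ qf < γ pf
        · obtain ⟨hg1, hg2⟩ := hG q hqR hq0.1 hq0.2 hdrop
          have hg1' : q + (γ pf - γ qf + 1) ≤ e := hg1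
          set s := γ pf - γ qf + 1 with hsdef
          have hb1 : q + 1 ≤ γ qf := (hγ.1 qf).1
          have hkklt : q + s - 1 < n := by omega
          set kk : Fin n := ⟨q + s - 1, hkklt⟩ with hkkdef
          have hkkv : kk.val = q + s - 1 := rfl
          have hkkval : γ kk = γ qf + (s - 1) := by
            have hidx : q + (s - 1) < n := by omega
            have h : γ (⟨q + (s - 1), hidx⟩ : Fin n) = γ pf - s + 1 + (s - 1) :=
              hg2 (s - 1) (by omega) hidx
            rw [show (⟨q + (s - 1), hidx⟩ : Fin n) = kk from
              Fin.ext (show q + (s - 1) = q + s - 1 by omega)] at h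
            omega
          rcases lt_or_ge k.val (q + s - 1) with hklt | hkge
          · exfalso
            have hscr : SameCarrel R k kk := sameCarrel_of_lt_end qf (by omega) (by omega)
            have hcrit := hck kk (Fin.lt_def.mpr (by omega)) hscr
            have hidx : q + (k.val - q) < n := by omega
            have h : γ (⟨q + (k.val - q), hidx⟩ : Fin n) = γ pf - s + 1 + (k.val - q) :=
              hg2 (k.val - q) (by omega) hidx
            rw [show (⟨q + (k.val - q), hidx⟩ : Fin n) = k from
              Fin.ext (show q + (k.val - q) = k.val by omega)] at h
            omega
          · have hscr : SameCarrel R kk k := sameCarrel_of_lt_end qf (by omega) hk2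
            have := chain hγ (by omega) hscr
            omega
        · push_neg at hdrop
          have hscr : SameCarrel R qf k := sameCarrel_of_lt_end qf le_rfl hk2
          have := chain hγ (by omega) hscr
          omega
      rcases lt_or_ge j.val e with hje | hje
      · exact le_trans hip (claim j hcj (by omega) hje)
      · have hef : e - 1 < n := by omega
        set ef : Fin n := ⟨e - 1, hef⟩ with hefdef
        have hefv : ef.val = e - 1 := rfl
        have hcef : IsCritical n R γ ef := crit_of_succ_mem (by
          rw [show ef.val + 1 = e by omega]
          exact carrelEnd_mem qf)
        have h1 : γ pf ≤ γ ef := claim ef hcef (by omega) (by omega)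
        have h2 : γ ef ≤ γ j := ih ef j hcef hcj (Fin.le_def.mpr (by omega)) (by omega)
        omega

end Main



/-- The two definitions of gapless R-tuple are equivalent: an R-increasing upper tuple γ
has a flag R-critical list (all critical entries weakly increasing in left-to-right
order) iff for all q_h ∈ R with γ_{q_h} > γ_{q_h+1}, setting s = γ_{q_h} − γ_{q_h+1} + 1,
one has s ≤ p_{h+1} and the first s entries of the (h+1)-st carrel are
γ_{q_h}−s+1, ..., γ_{q_h}. -/
theorem stmt12 (n : ℕ) (R : Finset ℕ) (hR : R ⊆ Finset.Ico 1 n)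
    (γ : Fin n → ℕ) (hγ : IsRIncrUpper n R γ) :
    (∀ i j : Fin n, IsCritical n R γ i → IsCritical n R γ j → i ≤ j → γ i ≤ γ j) ↔
      GaplessCond n R γ := by
  constructor
  · intro hflag q hqR hq0 hqn hdrop
    have hpf : q - 1 < n := by omega
    set pf : Fin n := ⟨q - 1, hpf⟩ with hpfdef
    have hpfv : pf.val = q - 1 := rfl
    set qf : Fin n := ⟨q, hqn⟩ with hqfdef
    have hqfv : qf.val = q := rfl
    have hdrop' : γ qf < γ pf := hdrop
    have hcp : IsCritical n R γ pf := crit_of_succ_mem (by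
      rw [show pf.val + 1 = q by omega]
      exact Finset.mem_insert_of_mem hqR)
    have hb : q + 1 ≤ γ qf := (hγ.1 qf).1
    set s := γ pf - γ qf + 1 with hsdef
    have claim : ∀ t, t ≤ s - 1 → ∃ ht : q + t < n,
        γ ⟨q + t, ht⟩ = γ qf + t ∧ ∀ m ∈ R, ¬(q + 1 ≤ m ∧ m ≤ q + t) := by
      intro t
      induction t with
      | zero =>
        refine fun _ => ⟨hqn, ?_, fun m hm hc => by omega⟩
        show γ qf = γ qf + 0
        rfl
      | succ t ihc =>
        intro hts
        obtain ⟨ht, hval, hrange⟩ := ihc (by omega)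
        have htv : (⟨q + t, ht⟩ : Fin n).val = q + t := rfl
        have hnc : ¬ IsCritical n R γ ⟨q + t, ht⟩ := by
          intro hc
          have := hflag pf ⟨q + t, ht⟩ hcp hc (Fin.le_def.mpr (by omega))
          omega
        obtain ⟨hlt, hnR2, heq⟩ := not_crit hγ _ hnc
        refine ⟨by omega, ?_, ?_⟩
        · have heq' : γ ⟨q + t + 1, hlt⟩ = γ ⟨q + t, ht⟩ + 1 := heq
          show γ ⟨q + t + 1, hlt⟩ = γ qf + (t + 1)
          omega
        · intro m hm hc
          by_cases hm2 : m ≤ q + t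
          · exact hrange m hm ⟨hc.1, hm2⟩
          · have hmeq : m = q + t + 1 := by omega
            exact hnR2 (hmeq ▸ hm)
    constructor
    · show q + s ≤ carrelEnd n R qf
      obtain ⟨hts, hvs, hrs⟩ := claim (s - 1) le_rfl
      unfold carrelEnd
      refine Finset.le_min' _ _ _ ?_
      intro m hm
      rw [Finset.mem_filter] at hm
      rcases Finset.mem_insert.mp hm.1 with h | h
      · omega
      · by_contra hcon
        push_neg at hcon
        have := hm.2
        exact hrs m h ⟨by omega, by omega⟩
    · intro t htlt ht
      have htlt' : t < s := htlt
      obtain ⟨ht2, hval, _⟩ := claim t (by omega)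
      show γ ⟨q + t, ht2⟩ = γ pf - s + 1 + t
      omega
  · intro hG i j hci hcj hle
    exact back_aux hR hγ hG (j.val - i.val) i j hci hcj hle le_rfl
end

section
/- For an upper R-tuple υ, the set {α : α an R-increasing upper tuple with α ≤ υ entrywise} equals the principal ideal {α : α ≤ Δ_R(υ)} in the poset of R-increasing upper tuples. -/
open Classical in
noncomputable def critSet (n : ℕ) (R : Finset ℕ) (ν : Fin n → ℕ) (i : Fin n) : Finset (Fin n) :=
  Finset.univ.filter (fun x => i ≤ x ∧ SameCarrel R i x ∧ IsCritical n R ν x)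

lemma coreMap_def (n : ℕ) (R : Finset ℕ) (ν : Fin n → ℕ) (i : Fin n) :
    coreMap n R ν i =
      if h : (critSet n R ν i).Nonempty then
        ν ((critSet n R ν i).min' h) - (((critSet n R ν i).min' h).val - i.val)
      else 0 := rfl

open Classical in
lemma mem_critSet {n : ℕ} {R : Finset ℕ} {ν : Fin n → ℕ} {i x : Fin n} :
    x ∈ critSet n R ν i ↔ i ≤ x ∧ SameCarrel R i x ∧ IsCritical n R ν x := by
  simp [critSet]

lemma critSet_nonempty (n : ℕ) (R : Finset ℕ) (ν : Fin n → ℕ) (i : Fin n) :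
    (critSet n R ν i).Nonempty := by
  have hne : ((insert n R).filter (fun q => i.val + 1 ≤ q)).Nonempty :=
    ⟨n, Finset.mem_filter.mpr ⟨Finset.mem_insert_self n R, i.isLt⟩⟩
  set e := carrelEnd n R i with he
  have hemem : e ∈ (insert n R).filter (fun q => i.val + 1 ≤ q) := Finset.min'_mem _ hne
  have hel : i.val + 1 ≤ e := (Finset.mem_filter.mp hemem).2
  have heu : e ≤ n := Finset.min'_le _ n (Finset.mem_filter.mpr ⟨Finset.mem_insert_self n R, i.isLt⟩)
  have hmin : ∀ q ∈ R, i.val + 1 ≤ q → e ≤ q := fun q hq h1 =>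
    Finset.min'_le _ q (Finset.mem_filter.mpr ⟨Finset.mem_insert_of_mem hq, h1⟩)
  refine ⟨⟨e - 1, by omega⟩, mem_critSet.mpr ⟨?_, ?_, ?_⟩⟩
  · exact Fin.le_def.mpr (by show i.val ≤ e - 1; omega)
  · intro q hq ⟨h1, h2⟩
    have h2' : q ≤ e - 1 := h2
    have := hmin q hq h1
    omega
  · intro j hj hsc
    exfalso
    have hjl : e - 1 < j.val := hj
    have h1 : e ∈ R := by
      rcases Finset.mem_insert.mp (Finset.mem_filter.mp hemem).1 with h | h
      · exfalso; have := j.isLt; omega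
      · exact h
    exact hsc e h1 ⟨by show e - 1 + 1 ≤ e; omega, by omega⟩

/-- The core is entrywise at most the original tuple. -/
lemma coreMap_le (n : ℕ) (R : Finset ℕ) (ν : Fin n → ℕ) (hu : IsUpperTuple n ν) (i : Fin n) :
    coreMap n R ν i ≤ ν i := by
  classical
  have hne := critSet_nonempty n R ν i
  rw [coreMap_def, dif_pos hne]
  set x := (critSet n R ν i).min' hne with hx
  obtain ⟨hix, hsix, hcx⟩ := mem_critSet.mp ((critSet n R ν i).min'_mem hne)
  -- the set T of indices in the same carrel as i, at or after i
  set T : Finset (Fin n) := Finset.univ.filter (fun j => i ≤ j ∧ SameCarrel R i j) with hT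
  have hiT : i ∈ T := by
    rw [hT]
    refine Finset.mem_filter.mpr ⟨Finset.mem_univ _, le_refl _, ?_⟩
    intro q hq ⟨h1, h2⟩; omega
  have hTne : T.Nonempty := ⟨i, hiT⟩
  set g : Fin n → ℕ := fun j => ν j + (n - j.val) with hg
  obtain ⟨y0, hy0T, hy0⟩ := Finset.exists_mem_eq_inf' hTne g
  set A : Finset (Fin n) := T.filter (fun j => g j = T.inf' hTne g) with hA
  have hAne : A.Nonempty := ⟨y0, Finset.mem_filter.mpr ⟨hy0T, hy0.symm⟩⟩
  set y := A.max' hAne with hy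
  have hyA : y ∈ A := A.max'_mem hAne
  have hyT : y ∈ T := (Finset.mem_filter.mp hyA).1
  obtain ⟨hiy, hsiy⟩ := (Finset.mem_filter.mp hyT).2
  have hgy : g y = T.inf' hTne g := (Finset.mem_filter.mp hyA).2
  -- y is critical
  have hycrit : IsCritical n R ν y := by
    intro j hyj hsyj
    have hsij : SameCarrel R i j := by
      intro q hq ⟨h1, h2⟩
      by_cases hqy : q ≤ y.val
      · exact hsiy q hq ⟨h1, hqy⟩
      · exact hsyj q hq ⟨by omega, h2⟩
    have hjT : j ∈ T := by
      have hij : i ≤ j := le_of_lt (lt_of_le_of_lt hiy hyj)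
      rw [hT]; exact Finset.mem_filter.mpr ⟨Finset.mem_univ _, hij, hsij⟩
    have hle : T.inf' hTne g ≤ g j := Finset.inf'_le _ hjT
    have hne' : g j ≠ T.inf' hTne g := by
      intro heq
      have hjA : j ∈ A := Finset.mem_filter.mpr ⟨hjT, heq⟩
      exact absurd (A.le_max' j hjA) (not_le.mpr hyj)
    have hlt : g y < g j := by omega
    have h1 : y.val < j.val := hyj
    have h2 : j.val < n := j.isLt
    simp only [hg] at hlt
    omega
  have hyc : y ∈ critSet n R ν i := mem_critSet.mpr ⟨hiy, hsiy, hycrit⟩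
  have hxy : x ≤ y := Finset.min'_le _ y hyc
  -- compare
  have key1 : ν x + y.val ≤ ν y + x.val := by
    rcases eq_or_lt_of_le hxy with heq | hlt
    · rw [heq]
    · have hsxy : SameCarrel R x y := by
        intro q hq ⟨h1, h2⟩
        exact hsiy q hq ⟨by have : i.val ≤ x.val := hix; omega, h2⟩
      exact le_of_lt (hcx y hlt hsxy)
  have key2 : ν y + i.val ≤ ν i + y.val := by
    have := Finset.inf'_le g hiT
    rw [← hgy] at this
    simp only [hg] at this
    have h1 : i.val ≤ y.val := hiy
    have h2 : y.val ≤ n := le_of_lt y.isLt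
    omega
  have h3 : i.val ≤ x.val := hix
  omega

/-- Strict increase along a carrel. -/
lemma chain_step {n : ℕ} {R : Finset ℕ} {α : Fin n → ℕ} (hα : IsRIncrUpper n R α) :
    ∀ k : ℕ, ∀ i x : Fin n, x.val = i.val + k → SameCarrel R i x → α i + k ≤ α x := by
  intro k
  induction k with
  | zero => intro i x h _; have : x = i := Fin.ext (by omega); simp [this]
  | succ k ih =>
    intro i x h hsc
    have hjlt : i.val + k < n := by have := x.isLt; omega
    set j : Fin n := ⟨i.val + k, hjlt⟩ with hj
    have hsij : SameCarrel R i j := by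
      intro q hq ⟨h1, h2⟩
      exact hsc q hq ⟨h1, by simp [hj] at h2; omega⟩
    have h1 : α i + k ≤ α j := ih i j rfl hsij
    have hnR : (j.val + 1) ∉ R := by
      intro hmem
      exact hsc (j.val + 1) hmem ⟨by show i.val + 1 ≤ i.val + k + 1; omega,
        by show i.val + k + 1 ≤ x.val; omega⟩
    have h2 : α j < α x := hα.2 j x (by show x.val = i.val + k + 1; omega) hnR
    omega

/-- For an upper R-tuple υ, the set of R-increasing upper tuples entrywise ≤ υ equals
the principal ideal of R-increasing upper tuples entrywise ≤ Δ_R(υ). -/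
theorem stmt15 (n : ℕ) (R : Finset ℕ) (hR : R ⊆ Finset.Ico 1 n)
    (υ : Fin n → ℕ) (hu : IsUpperTuple n υ) :
    {α : Fin n → ℕ | IsRIncrUpper n R α ∧ ∀ i, α i ≤ υ i} =
      {α : Fin n → ℕ | IsRIncrUpper n R α ∧ ∀ i, α i ≤ coreMap n R υ i} := by
  ext α
  simp only [Set.mem_setOf_eq]
  constructor
  · rintro ⟨hα, hle⟩
    refine ⟨hα, fun i => ?_⟩
    have hne := critSet_nonempty n R υ i
    rw [coreMap_def, dif_pos hne]
    set x := (critSet n R υ i).min' hne with hx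
    obtain ⟨hix, hsix, -⟩ := mem_critSet.mp ((critSet n R υ i).min'_mem hne)
    have hiv : i.val ≤ x.val := hix
    have h1 : α i + (x.val - i.val) ≤ α x := chain_step hα (x.val - i.val) i x (by omega) hsix
    have h2 : α x ≤ υ x := hle x
    omega
  · rintro ⟨hα, hle⟩
    exact ⟨hα, fun i => le_trans (hle i) (coreMap_le n R υ hu i)⟩
end
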